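/- arXiv:2503.01026 — 6 statements merged into one kernel-verified Lean document; each statement's English description precedes it below -/
import Mathlib

section
/- Every positive integer m has a unique representation m = Σ_{1≤i≤t} e_i N_{t-i} with digits e_i ∈ {0,1}, leading digit e_1 = 1, and such that the digit string e_1...e_t contains no occurrence of the block 11 or 101. -/
def nara : ℕ → ℕ
  | 0 => 1
  | 1 => 2
  | 2 => 3
  | (i+3) => nara (i+2) + nara i

/-- The value of a digit string (most significant digit first) in the Narayana
numeration system: `[e₁ ⋯ e_t]_N = Σ e_i N_{t-i}`. -/
def valN : List Bool → ℕ
  | [] => 0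
  | b :: rest => (if b then nara rest.length else 0) + valN rest

/-- The digit string contains no occurrence of the block `11` or `101`. -/
def GoodDigits (L : List Bool) : Prop :=
  ∀ k, L.getD k false = true → L.getD (k+1) false = false ∧ L.getD (k+2) false = false

lemma nara_add3 (i : ℕ) : nara (i+3) = nara (i+2) + nara i := rfl

lemma nara_pos : ∀ n, 0 < nara n
  | 0 => by norm_num [nara]
  | 1 => by norm_num [nara]
  | 2 => by norm_num [nara]
  | (n+3) => by
      have h1 := nara_add3 n
      have h2 := nara_pos n
      omega

lemma nara_lt_succ : ∀ n, nara n < nara (n+1)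
  | 0 => by norm_num [nara]
  | 1 => by norm_num [nara]
  | 2 => by norm_num [nara]
  | (n+3) => by
      have h1 : nara (n+3+1) = nara (n+3) + nara (n+1) := nara_add3 (n+1)
      have h2 := nara_pos (n+1)
      omega

lemma nara_mono : StrictMono nara := strictMono_nat_of_lt_succ nara_lt_succ

lemma self_lt_nara : ∀ n, n < nara n := by
  intro n
  induction n with
  | zero => norm_num [nara]
  | succ n ih => have := nara_lt_succ n; omega

lemma valN_true (L : List Bool) : valN (true :: L) = nara L.length + valN L := by
  simp [valN]

lemma valN_false (L : List Bool) : valN (false :: L) = valN L := by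
  simp [valN]

lemma valN_tff (L : List Bool) :
    valN (true :: false :: false :: L) = nara (L.length + 2) + valN L := by
  simp [valN]

lemma good_nil : GoodDigits [] := by intro k hk; simp at hk

lemma good_tail {b : Bool} {L : List Bool} (h : GoodDigits (b :: L)) : GoodDigits L := by
  intro k hk
  have := h (k+1) (by simpa using hk)
  simpa using this

lemma good_cons_false {L : List Bool} (h : GoodDigits L) : GoodDigits (false :: L) := by
  intro k hk
  match k with
  | 0 => simp at hk
  | (k+1) =>
      simp only [List.getD_cons_succ] at hk ⊢
      exact h k hk

lemma good_tff {L : List Bool} (h : GoodDigits L) :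
    GoodDigits (true :: false :: false :: L) := by
  intro k hk
  match k with
  | 0 => simp
  | 1 => simp at hk
  | 2 => simp at hk
  | (k+3) =>
      simp only [List.getD_cons_succ] at hk ⊢
      exact h k hk

lemma maxval : ∀ L : List Bool, GoodDigits L → valN L < nara L.length
  | [] => fun _ => by norm_num [valN, nara]
  | false :: L => fun h => by
      have ih := maxval L (good_tail h)
      have hle : nara L.length ≤ nara (L.length + 1) := (nara_lt_succ L.length).le
      have elen : (false :: L).length = L.length + 1 := rfl
      rw [valN_false, elen]
      omega
  | [true] => fun _ => by norm_num [valN, nara]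
  | [true, b] => fun h => by
      have hb := (h 0 (by simp)).1
      simp only [List.getD_cons_succ, List.getD_cons_zero] at hb
      subst hb
      norm_num [valN, nara]
  | true :: b :: c :: L => fun h => by
      have h0 := h 0 (by simp)
      simp only [List.getD_cons_succ, List.getD_cons_zero] at h0
      obtain ⟨hb, hc⟩ := h0
      subst hb; subst hc
      have ih := maxval L (good_tail (good_tail (good_tail h)))
      have hrec := nara_add3 L.length
      have elen : (true :: false :: false :: L).length = L.length + 3 := rfl
      rw [valN_tff, elen]
      omega

lemma exists_rep : ∀ n, ∀ r, r < nara n →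
    ∃ L : List Bool, GoodDigits L ∧ L.length = n ∧ valN L = r := by
  intro n
  induction n using Nat.strong_induction_on with
  | _ n ih =>
    match n with
    | 0 =>
        intro r hr
        have : r = 0 := by simp [nara] at hr; omega
        exact ⟨[], good_nil, rfl, by simp [valN, this]⟩
    | 1 =>
        intro r hr
        have hr2 : r < 2 := by simpa [nara] using hr
        interval_cases r
        · exact ⟨[false], good_cons_false good_nil, rfl, by simp [valN]⟩
        · exact ⟨[true], by intro k hk; match k with
            | 0 => simp
            | (k+1) => simp at hk, rfl, by norm_num [valN, nara]⟩
    | 2 =>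
        intro r hr
        by_cases h : r < nara 1
        · obtain ⟨L, hg, hl, hv⟩ := ih 1 (by omega) r h
          exact ⟨false :: L, good_cons_false hg, by simp [hl], by simp [valN, hv]⟩
        · have hr2 : r = 2 := by
            simp only [nara] at hr h; omega
          refine ⟨[true, false], ?_, rfl, by norm_num [valN, nara, hr2]⟩
          intro k hk
          match k with
          | 0 => simp
          | 1 => simp at hk
          | (k+2) => simp at hk
    | (k+3) =>
        intro r hr
        by_cases h : r < nara (k+2)
        · obtain ⟨L, hg, hl, hv⟩ := ih (k+2) (by omega) r h
          exact ⟨false :: L, good_cons_false hg, by simp [hl], by simp [valN, hv]⟩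
        · push_neg at h
          have hrec := nara_add3 k
          have h3 : r - nara (k+2) < nara k := by omega
          obtain ⟨L, hg, hl, hv⟩ := ih k (by omega) _ h3
          refine ⟨true :: false :: false :: L, good_tff hg, by simp [hl], ?_⟩
          rw [valN_tff, hl, hv]
          omega

lemma val_inj : ∀ L₁ L₂ : List Bool, GoodDigits L₁ → GoodDigits L₂ →
    L₁.length = L₂.length → valN L₁ = valN L₂ → L₁ = L₂
  | [], [], _, _, _, _ => rfl
  | [], b :: L, _, _, h, _ => by simp at h
  | b :: L, [], _, _, h, _ => by simp at h
  | true :: L₁, true :: L₂, h₁, h₂, hl, hv => by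
      have hl' : L₁.length = L₂.length := by simpa using hl
      rw [valN_true, valN_true, hl'] at hv
      have hv' : valN L₁ = valN L₂ := by omega
      rw [val_inj L₁ L₂ (good_tail h₁) (good_tail h₂) hl' hv']
  | false :: L₁, false :: L₂, h₁, h₂, hl, hv => by
      have hl' : L₁.length = L₂.length := by simpa using hl
      rw [valN_false, valN_false] at hv
      rw [val_inj L₁ L₂ (good_tail h₁) (good_tail h₂) hl' hv]
  | true :: L₁, false :: L₂, h₁, h₂, hl, hv => by
      exfalso
      have hl' : L₁.length = L₂.length := by simpa using hl
      have hmax := maxval L₂ (good_tail h₂)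
      rw [valN_true, valN_false, hl'] at hv
      omega
  | false :: L₁, true :: L₂, h₁, h₂, hl, hv => by
      exfalso
      have hl' : L₁.length = L₂.length := by simpa using hl
      have hmax := maxval L₁ (good_tail h₁)
      rw [valN_true, valN_false] at hv
      rw [hl'] at hmax
      omega

theorem narayana_rep_unique (m : ℕ) (hm : 0 < m) :
    ∃! L : List Bool, L.head? = some true ∧ GoodDigits L ∧ valN L = m := by
  have hkey : ∀ L : List Bool, L.head? = some true → GoodDigits L → valN L = m →
      nara (L.length - 1) ≤ m ∧ m < nara L.length := by
    intro L hh hg hv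
    match L with
    | [] => simp at hh
    | b :: L' =>
        have hb : b = true := by simpa using hh
        subst hb
        constructor
        · rw [valN_true] at hv
          simp only [List.length_cons, Nat.add_sub_cancel]
          omega
        · rw [← hv]; exact maxval _ hg
  set t := Nat.findGreatest (fun t => nara t ≤ m) m with ht
  have h1 : nara t ≤ m :=
    Nat.findGreatest_spec (P := fun k => nara k ≤ m) (Nat.zero_le m)
      (by show nara 0 ≤ m; norm_num [nara]; omega)
  have h2 : m < nara (t+1) := by
    by_cases hc : t + 1 ≤ m
    · have hng := Nat.findGreatest_is_greatest (P := fun k => nara k ≤ m)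
        (lt_add_one t) hc
      omega
    · have := self_lt_nara (t+1)
      omega
  obtain ⟨L, hg, hl, hv⟩ := exists_rep (t+1) m h2
  have hhead : L.head? = some true := by
    match L, hl with
    | b :: L', hl =>
        have hl' : L'.length = t := by simpa using hl
        cases b with
        | false =>
            exfalso
            have hmax := maxval L' (good_tail hg)
            rw [valN_false] at hv
            rw [hl'] at hmax
            omega
        | true => rfl
  refine ⟨L, ⟨hhead, hg, hv⟩, ?_⟩
  rintro L' ⟨hh', hg', hv'⟩
  obtain ⟨ha, hb⟩ := hkey L' hh' hg' hv'
  have hne : L' ≠ [] := by intro h; subst h; simp at hh'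
  have hlpos : 0 < L'.length := List.length_pos_iff.mpr hne
  have hlen' : L'.length = t + 1 := by
    by_contra hne2
    rcases lt_or_gt_of_ne hne2 with h | h
    · have := nara_mono.monotone (show L'.length ≤ t by omega)
      omega
    · have := nara_mono.monotone (show t + 1 ≤ L'.length - 1 by omega)
      omega
  exact val_inj L' L hg' hg (by omega) (by omega)
end

section
/- For all i ≥ 0, the prefix q_i = ν^i(0) of the Narayana word satisfies |q_i|_0 = N_{i-2}, |q_i|_1 = N_{i-3}, and |q_i|_2 = N_{i-4}, where the Narayana numbers are extended backwards by the recurrence so that N_{-2} = N_{-1} = 1 and N_{-3} = 0, N_{-4} = 1. -/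
def nu : Fin 3 → List (Fin 3) := fun a => if a = 0 then [0, 1] else if a = 1 then [2] else [0]

def nuPow (k : ℕ) : List (Fin 3) := (fun w => w.flatMap nu)^[k] [0]

lemma flatMap_counts (w : List (Fin 3)) :
    (w.flatMap nu).count 0 = w.count 0 + w.count 2 ∧
    (w.flatMap nu).count 1 = w.count 0 ∧
    (w.flatMap nu).count 2 = w.count 1 := by
  induction w with
  | nil => simp
  | cons a t ih =>
    obtain ⟨ih0, ih1, ih2⟩ := ih
    fin_cases a <;>
      simp [List.flatMap_cons, nu, List.count_cons, List.count_append, ih0, ih1, ih2] <;> omega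

theorem nu_iter_letter_counts (N : ℤ → ℤ)
    (h0 : N 0 = 1) (h1 : N (-1) = 1) (h2 : N (-2) = 1)
    (hrec : ∀ i : ℤ, N i = N (i - 1) + N (i - 3)) :
    ∀ i : ℕ, ((nuPow i).count 0 : ℤ) = N ((i : ℤ) - 2) ∧
      ((nuPow i).count 1 : ℤ) = N ((i : ℤ) - 3) ∧
      ((nuPow i).count 2 : ℤ) = N ((i : ℤ) - 4) := by
  have h3 : N (-3) = 0 := by have := hrec 0; simp at this; omega
  have h4 : N (-4) = 0 := by have := hrec (-1); norm_num at this; omega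
  intro i
  induction i with
  | zero => simp [nuPow, h2, h3, h4]
  | succ n ih =>
    obtain ⟨ih0, ih1, ih2⟩ := ih
    have hstep : nuPow (n + 1) = (nuPow n).flatMap nu := by
      simp [nuPow, Function.iterate_succ_apply']
    obtain ⟨c0, c1, c2⟩ := flatMap_counts (nuPow n)
    rw [hstep]
    refine ⟨?_, ?_, ?_⟩
    · push_cast [c0]
      have := hrec ((n : ℤ) - 1)
      rw [ih0, ih2]
      have e : ((n : ℤ) + 1 - 2) = (n : ℤ) - 1 := by ring
      rw [e, this]; ring_nf
    · push_cast [c1]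
      rw [ih0]; congr 1; ring
    · push_cast [c2]
      rw [ih1]
      congr 1; ring
end

section
/- If the Narayana representation of i is N_{d_1} + N_{d_2} + ... + N_{d_t} with d_1 > d_2 > ... > d_t, then the prefix of length i of the Narayana word n equals the concatenation ν^{d_1}(0) ν^{d_2}(0) ⋯ ν^{d_t}(0). -/
def nword (i : ℕ) : Fin 3 := (nuPow (i+2)).getD i 0


/-! Since `ν^(k+3)(0) = ν^(k+2)(0) ν^k(0)`, a concatenation `ν^(d₁)(0) ⋯ ν^(dₜ)(0)` with gaps
`dⱼ - dⱼ₊₁ ≥ 3` telescopes into a prefix of `ν^(d₁+1)(0)`, of length `N_{d₁} + ⋯ + N_{dₜ} = i`.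
The words `ν^k(0)` increase under the prefix order and `d₁ < N_{d₁} ≤ i`, so it is the prefix of
length `i` of `ν^(i+2)(0)`, which is also the prefix of length `i` of `n`. -/

lemma nuPow_succ (k : ℕ) : nuPow (k + 1) = (nuPow k).flatMap nu :=
  Function.iterate_succ_apply' _ _ _

lemma nuPow_add_three : ∀ k : ℕ, nuPow (k + 3) = nuPow (k + 2) ++ nuPow k
  | 0 => by decide
  | k + 1 => by
    rw [nuPow_succ (k + 3), nuPow_add_three k, List.flatMap_append, ← nuPow_succ, ← nuPow_succ,
      nuPow_add_three k, List.append_assoc]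

lemma nuPow_prefix_succ : ∀ k : ℕ, nuPow k <+: nuPow (k + 1)
  | 0 => by decide
  | k + 1 => by
    obtain ⟨t, ht⟩ := nuPow_prefix_succ k
    exact ⟨t.flatMap nu, by rw [nuPow_succ, nuPow_succ, ← ht, List.flatMap_append]⟩

lemma nuPow_prefix_of_le {j k : ℕ} (h : j ≤ k) : nuPow j <+: nuPow k := by
  induction h with
  | refl => exact List.prefix_refl _
  | step _ ih => exact ih.trans (nuPow_prefix_succ _)

lemma length_nuPow : ∀ k : ℕ, (nuPow k).length = nara k
  | 0 | 1 | 2 => rfl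
  | k + 3 => by
    rw [nuPow_add_three, List.length_append, length_nuPow (k + 2), length_nuPow k, nara]

lemma lt_nara : ∀ k : ℕ, k < nara k
  | 0 | 1 | 2 => by decide
  | k + 3 => by
    have := lt_nara (k + 2)
    have := lt_nara k
    rw [nara]
    omega

lemma take_nuPow_eq_map_nword (i : ℕ) : (nuPow (i + 2)).take i = (List.range i).map nword := by
  have hlen : i ≤ (nuPow (i + 2)).length := by
    have := lt_nara (i + 2)
    rw [length_nuPow]
    omega
  apply List.ext_getElem (by simpa using hlen)
  intro j hj _
  have hji : j < i := hj.trans_le (List.length_take_le _ _)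
  have hj_len : j < (nuPow (j + 2)).length := by
    have := lt_nara (j + 2)
    rw [length_nuPow]
    omega
  rw [List.getElem_take, List.getElem_map, List.getElem_range, nword,
    List.getD_eq_getElem _ _ hj_len, (nuPow_prefix_of_le (by omega : j + 2 ≤ i + 2)).getElem]

lemma flatten_map_nuPow_prefix {d : List ℕ} (hgap : d.IsChain (fun a b => b + 3 ≤ a)) :
    ∀ m : ℕ, (∀ k ∈ d.head?, k < m) → (d.map nuPow).flatten <+: nuPow m := by
  induction d with
  | nil => exact fun _ _ => List.nil_prefix
  | cons k d ih =>
    intro m hkm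
    replace hkm : k < m := hkm k rfl
    cases d with
    | nil => simpa using nuPow_prefix_of_le hkm.le
    | cons j d =>
      obtain ⟨hjk, hgap_tail⟩ := List.isChain_cons_cons.mp hgap
      obtain ⟨k, rfl⟩ : ∃ k', k = k' + 2 := ⟨k - 2, by omega⟩
      have htail := ih hgap_tail k (fun j' hj' => by cases hj'; omega)
      calc (((k + 2) :: j :: d).map nuPow).flatten
          = nuPow (k + 2) ++ ((j :: d).map nuPow).flatten := rfl
        _ <+: nuPow (k + 2) ++ nuPow k := (List.prefix_append_right_inj _).mpr htail
        _ = nuPow (k + 3) := (nuPow_add_three k).symm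
        _ <+: nuPow m := nuPow_prefix_of_le hkm

theorem prefix_factorization (i : ℕ) (d : List ℕ)
    (hgap : d.Chain' (fun a b => b + 3 ≤ a))
    (hsum : (d.map nara).sum = i) :
    (d.map nuPow).flatten = (List.range i).map nword := by
  have hlen : ((d.map nuPow).flatten).length = i := by
    simp [List.length_flatten, Function.comp_def, length_nuPow, ← hsum]
  have hhead : ∀ k ∈ d.head?, k < i + 2 := by
    intro k hk
    have hk_le : nara k ≤ i := hsum ▸ List.le_sum_of_mem
      (List.mem_map_of_mem (List.mem_of_mem_head? hk))
    have := lt_nara k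
    omega
  have hpre := flatten_map_nuPow_prefix hgap (i + 2) hhead
  rw [List.prefix_iff_eq_take, hlen] at hpre
  rw [hpre, take_nuPow_eq_map_nword]
end

section
/- For all i ≥ 0, −0.8 < [(i)_N 0]_N − α·i < 1.05, where [(i)_N 0]_N denotes the integer obtained by appending a 0 digit to the Narayana representation of i (i.e., if i = Σ_j N_{f_j} then [(i)_N 0]_N = Σ_j N_{f_j + 1}), and α is the real root of X^3 = X^2 + 1. -/
set_option maxRecDepth 4000
set_option maxHeartbeats 1000000

def NaraRep (F : Finset ℕ) (m : ℕ) : Prop :=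
  (∑ f ∈ F, nara f) = m ∧ ∀ a ∈ F, ∀ b ∈ F, a < b → a + 3 ≤ b

noncomputable def err (α : ℝ) (n : ℕ) : ℝ := (nara (n+1) : ℝ) - α * nara n

noncomputable def Qf (α : ℝ) (n : ℕ) : ℝ :=
  α * (err α (n+1))^2 + (α^2 - α) * (err α n) * (err α (n+1)) + (err α n)^2

noncomputable def Ut : ℕ → ℝ
  | 0 => 1.0407
  | 1 => 0.5751
  | 2 => 0.5062
  | 3 => 0.5062
  | 4 => 0.5062
  | 5 => 0.2996
  | 6 => 0.2996
  | 7 => 0.2996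
  | 8 => 0.1454
  | 9 => 0.1454
  | 10 => 0.1454
  | 11 => 0.1094
  | 12 => 0.0796
  | 13 => 0.0796
  | 14 => 0.0796
  | 15 => 0.0428
  | 16 => 0.0428
  | 17 => 0.0428
  | 18 => 0.0209
  | 19 => 0.0209
  | 20 => 0.0209
  | 21 => 0.0208
  | 22 => 0.0139
  | 23 => 0.0139
  | (n+24) => (1.3486 * 0.8262 ^ (n+24))

noncomputable def Lt : ℕ → ℝ
  | 0 => -0.7907
  | 1 => -0.7907
  | 2 => -0.7907
  | 3 => -0.3939
  | 4 => -0.3939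
  | 5 => -0.3939
  | 6 => -0.2562
  | 7 => -0.2037
  | 8 => -0.2037
  | 9 => -0.2037
  | 10 => -0.1152
  | 11 => -0.1152
  | 12 => -0.1152
  | 13 => -0.0565
  | 14 => -0.0565
  | 15 => -0.0565
  | 16 => -0.0494
  | 17 => -0.0345
  | 18 => -0.0345
  | 19 => -0.0345
  | 20 => -0.0195
  | 21 => -0.0195
  | 22 => -0.0195
  | 23 => -0.0139
  | (n+24) => -(1.3486 * 0.8262 ^ (n+24))


lemma Ut24 : Ut 24 = 1.3486 * 0.8262 ^ 24 := rfl
lemma Ut25 : Ut 25 = 1.3486 * 0.8262 ^ 25 := rfl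
lemma Ut26 : Ut 26 = 1.3486 * 0.8262 ^ 26 := rfl
lemma Lt24 : Lt 24 = -(1.3486 * 0.8262 ^ 24) := rfl
lemma Lt25 : Lt 25 = -(1.3486 * 0.8262 ^ 25) := rfl
lemma Lt26 : Lt 26 = -(1.3486 * 0.8262 ^ 26) := rfl

lemma alpha_bounds (α : ℝ) (hα : α ^ 3 = α ^ 2 + 1) : 1.46557123 < α ∧ α < 1.46557124 := by
  constructor <;> nlinarith [hα, sq_nonneg (α - 1.46557123), sq_nonneg (α - 1.46557124), sq_nonneg α, sq_nonneg (α-1), sq_nonneg (α+1)]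

lemma nat3ind {P : ℕ → Prop} (h0 : P 0) (h1 : P 1) (h2 : P 2)
    (hs : ∀ n, P n → P (n+2) → P (n+3)) : ∀ n, P n := by
  intro n
  induction n using Nat.strong_induction_on with
  | _ n ih =>
    match n with
    | 0 => exact h0
    | 1 => exact h1
    | 2 => exact h2
    | (m+3) => exact hs m (ih m (by omega)) (ih (m+2) (by omega))

lemma err_rec3 (α : ℝ) (n : ℕ) : err α (n+3) = err α (n+2) + err α n := by
  have h1 : nara (n+4) = nara (n+3) + nara (n+1) := rfl
  have h2 : nara (n+3) = nara (n+2) + nara n := rfl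
  simp only [err, h1, h2]
  push_cast
  ring

lemma err_rec2 (α : ℝ) (hα : α ^ 3 = α ^ 2 + 1) :
    ∀ n, α * err α (n+2) = (α - α^2) * err α (n+1) - err α n := by
  apply nat3ind
  · simp only [err, show nara 0 = 1 from rfl, show nara 1 = 2 from rfl,
      show nara 2 = 3 from rfl, show nara 3 = 4 from rfl]
    push_cast
    linear_combination (-2 : ℝ) * hα
  · simp only [err, show nara 1 = 2 from rfl, show nara 2 = 3 from rfl,
      show nara 3 = 4 from rfl, show nara 4 = 6 from rfl]
    push_cast
    linear_combination (-3 : ℝ) * hα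
  · simp only [err, show nara 2 = 3 from rfl, show nara 3 = 4 from rfl,
      show nara 4 = 6 from rfl, show nara 5 = 9 from rfl]
    push_cast
    linear_combination (-4 : ℝ) * hα
  · intro n ih0 ih2
    have h5 : err α (n+5) = err α (n+4) + err α (n+2) := err_rec3 α (n+2)
    have h4 : err α (n+4) = err α (n+3) + err α (n+1) := err_rec3 α (n+1)
    have h3 : err α (n+3) = err α (n+2) + err α n := err_rec3 α n
    linear_combination ih2 + ih0 + α * h5 + (α^2 - α) * h4 + h3

lemma Q_step (α : ℝ) (hα : α ^ 3 = α ^ 2 + 1) (hpos : 0 < α) (n : ℕ) :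
    α * Qf α (n+1) = Qf α n := by
  have h := err_rec2 α hα n
  apply mul_left_cancel₀ (ne_of_gt hpos)
  simp only [Qf]
  linear_combination (α^2 * err α (n+2) - α * err α n) * h

lemma Q_pow (α : ℝ) (hα : α ^ 3 = α ^ 2 + 1) (hpos : 0 < α) :
    ∀ n, α^n * Qf α n = Qf α 0 := by
  intro n
  induction n with
  | zero => simp
  | succ n ih =>
    have := Q_step α hα hpos n
    calc α^(n+1) * Qf α (n+1) = α^n * (α * Qf α (n+1)) := by ring
    _ = α^n * Qf α n := by rw [this]
    _ = Qf α 0 := ih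

lemma Q_zero_le (α : ℝ) (hα : α ^ 3 = α ^ 2 + 1) : Qf α 0 ≤ 0.3179 := by
  obtain ⟨hL, hH⟩ := alpha_bounds α hα
  simp only [Qf, err, show nara 0 = 1 from rfl, show nara 1 = 2 from rfl,
    show nara 2 = 3 from rfl]
  push_cast
  nlinarith [hL, hH, sq_nonneg (α - 1.46557123), mul_pos (sub_pos.2 hL) (sub_pos.2 hH)]

lemma Q_posdef (α : ℝ) (hα : α ^ 3 = α ^ 2 + 1) (n : ℕ) :
    0.92 * (err α n)^2 ≤ Qf α n := by
  obtain ⟨hL, hH⟩ := alpha_bounds α hα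
  have hsq : (α^2 - α)^2 = α - 1 := by linear_combination (α - 1) * hα
  have key : 4*α*(Qf α n - 0.92*(err α n)^2) =
      (2*α*err α (n+1) + (α^2-α)*err α n)^2 + (0.32*α - α + 1)*(err α n)^2 := by
    simp only [Qf]
    linear_combination (-(err α n)^2) * hsq
  nlinarith [key, sq_nonneg (2*α*err α (n+1) + (α^2-α)*err α n), sq_nonneg (err α n), hL, hH]

lemma err_abs (α : ℝ) (hα : α ^ 3 = α ^ 2 + 1) (n : ℕ) :
    |err α n| ≤ 0.588 * 0.8262 ^ n := by
  obtain ⟨hL, hH⟩ := alpha_bounds α hα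
  have hpos : (0:ℝ) < α := by linarith
  have hA : (0:ℝ) ≤ α^n := le_of_lt (pow_pos hpos n)
  have h6 : 0.92 * (α^n * (err α n)^2) ≤ 0.3179 := by
    have h2 := Q_posdef α hα n
    have := mul_le_mul_of_nonneg_left h2 hA
    rw [Q_pow α hα hpos n] at this
    nlinarith [this, Q_zero_le α hα]
  have h5 : (1:ℝ) ≤ (0.8262^2 * α)^n := by
    calc (1:ℝ) = 1^n := (one_pow n).symm
    _ ≤ (0.8262^2 * α)^n := by
        apply pow_le_pow_left₀ (by norm_num)
        nlinarith
  have hrw : ((0.8262:ℝ)^2 * α)^n = (0.8262^n)^2 * α^n := by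
    rw [mul_pow, ← pow_mul, ← pow_mul, Nat.mul_comm]
  rw [hrw] at h5
  have hrn : (0:ℝ) ≤ (0.8262:ℝ)^n := by positivity
  have herr2 : (err α n)^2 ≤ 0.345744 * ((0.8262:ℝ)^n)^2 := by
    nlinarith [h5, h6, sq_nonneg (err α n), mul_le_mul_of_nonneg_left h6 (sq_nonneg ((0.8262:ℝ)^n)),
      mul_le_mul_of_nonneg_right h5 (sq_nonneg (err α n)), sq_nonneg ((0.8262:ℝ)^n), hA]
  rw [abs_le]
  constructor <;> nlinarith [herr2, sq_nonneg (err α n + 0.588 * 0.8262^n),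
    sq_nonneg (err α n - 0.588 * 0.8262^n), hrn]


lemma Ut_succ_le (m : ℕ) : Ut (m+1) ≤ Ut m := by
  rcases Nat.lt_or_ge m 24 with h | h
  · interval_cases m <;> simp only [Ut24, Ut] <;> norm_num
  · obtain ⟨k, rfl⟩ := Nat.exists_eq_add_of_le' h
    rw [show k + 24 + 1 = (k+1) + 24 from by omega]
    show 1.3486 * 0.8262 ^ ((k+1)+24) ≤ 1.3486 * 0.8262 ^ (k+24)
    have : (0.8262:ℝ) ^ ((k+1)+24) ≤ 0.8262 ^ (k+24) :=
      pow_le_pow_of_le_one (by norm_num) (by norm_num) (by omega)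
    nlinarith [this]

lemma Lt_le_succ (m : ℕ) : Lt m ≤ Lt (m+1) := by
  rcases Nat.lt_or_ge m 24 with h | h
  · interval_cases m <;> simp only [Lt24, Lt] <;> norm_num
  · obtain ⟨k, rfl⟩ := Nat.exists_eq_add_of_le' h
    rw [show k + 24 + 1 = (k+1) + 24 from by omega]
    show -(1.3486 * 0.8262 ^ (k+24)) ≤ -(1.3486 * 0.8262 ^ ((k+1)+24))
    have : (0.8262:ℝ) ^ ((k+1)+24) ≤ 0.8262 ^ (k+24) :=
      pow_le_pow_of_le_one (by norm_num) (by norm_num) (by omega)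
    nlinarith [this]

lemma Ut_anti : Antitone Ut := antitone_nat_of_succ_le Ut_succ_le

lemma Lt_mono : Monotone Lt := monotone_nat_of_le_succ Lt_le_succ

lemma Ut_nonneg (m : ℕ) : 0 ≤ Ut m := by
  rcases Nat.lt_or_ge m 24 with h | h
  · interval_cases m <;> simp only [Ut] <;> norm_num
  · obtain ⟨k, rfl⟩ := Nat.exists_eq_add_of_le' h
    show (0:ℝ) ≤ 1.3486 * 0.8262 ^ (k+24)
    positivity

lemma Lt_nonpos (m : ℕ) : Lt m ≤ 0 := by
  rcases Nat.lt_or_ge m 24 with h | h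
  · interval_cases m <;> simp only [Lt] <;> norm_num
  · obtain ⟨k, rfl⟩ := Nat.exists_eq_add_of_le' h
    show -(1.3486 * 0.8262 ^ (k+24)) ≤ (0:ℝ)
    have : (0:ℝ) ≤ 1.3486 * 0.8262 ^ (k+24) := by positivity
    linarith

lemma Ut_step (α : ℝ) (hα : α ^ 3 = α ^ 2 + 1) (f : ℕ) :
    err α f + Ut (f+3) ≤ Ut f := by
  obtain ⟨hL, hH⟩ := alpha_bounds α hα
  rcases Nat.lt_or_ge f 24 with h | h
  · rcases Nat.lt_or_ge f 21 with h2 | h2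
    swap
    · have hp24 : (0.8262:ℝ)^24 = 0.8262^24 := rfl
      interval_cases f <;>
        simp only [err, Ut24, Ut25, Ut26, Ut, show nara 21 = 4023 from rfl,
          show nara 22 = 5896 from rfl, show nara 23 = 8641 from rfl,
          show nara 24 = 12664 from rfl] <;>
        push_cast <;> nlinarith [hL, hH]
    interval_cases f <;>
      simp only [err, Ut, show nara 0 = 1 from rfl, show nara 1 = 2 from rfl, show nara 2 = 3 from rfl, show nara 3 = 4 from rfl, show nara 4 = 6 from rfl, show nara 5 = 9 from rfl, show nara 6 = 13 from rfl, show nara 7 = 19 from rfl, show nara 8 = 28 from rfl, show nara 9 = 41 from rfl, show nara 10 = 60 from rfl, show nara 11 = 88 from rfl, show nara 12 = 129 from rfl, show nara 13 = 189 from rfl, show nara 14 = 277 from rfl, show nara 15 = 406 from rfl, show nara 16 = 595 from rfl, show nara 17 = 872 from rfl, show nara 18 = 1278 from rfl, show nara 19 = 1873 from rfl, show nara 20 = 2745 from rfl, show nara 21 = 4023 from rfl, show nara 22 = 5896 from rfl, show nara 23 = 8641 from rfl, show nara 24 = 12664 from rfl] <;>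
      push_cast <;> linarith [hL, hH]
  · obtain ⟨k, rfl⟩ := Nat.exists_eq_add_of_le' h
    have habs := err_abs α hα (k+24)
    have h1 : err α (k+24) ≤ 0.588 * 0.8262 ^ (k+24) := (abs_le.mp habs).2
    rw [show k + 24 + 3 = (k+3) + 24 from by omega]
    show err α (k+24) + 1.3486 * 0.8262 ^ ((k+3)+24) ≤ 1.3486 * 0.8262 ^ (k+24)
    have hp : (0.8262:ℝ) ^ ((k+3)+24) = 0.8262^3 * 0.8262 ^ (k+24) := by
      rw [← pow_add]; ring_nf
    rw [hp]
    have hrn : (0:ℝ) ≤ (0.8262:ℝ)^(k+24) := by positivity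
    nlinarith [h1, hrn]

lemma Lt_step (α : ℝ) (hα : α ^ 3 = α ^ 2 + 1) (f : ℕ) :
    Lt f ≤ err α f + Lt (f+3) := by
  obtain ⟨hL, hH⟩ := alpha_bounds α hα
  rcases Nat.lt_or_ge f 24 with h | h
  · rcases Nat.lt_or_ge f 21 with h2 | h2
    swap
    · interval_cases f <;>
        simp only [err, Lt24, Lt25, Lt26, Lt, show nara 21 = 4023 from rfl,
          show nara 22 = 5896 from rfl, show nara 23 = 8641 from rfl,
          show nara 24 = 12664 from rfl] <;>
        push_cast <;> nlinarith [hL, hH]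
    interval_cases f <;>
      simp only [err, Lt, show nara 0 = 1 from rfl, show nara 1 = 2 from rfl, show nara 2 = 3 from rfl, show nara 3 = 4 from rfl, show nara 4 = 6 from rfl, show nara 5 = 9 from rfl, show nara 6 = 13 from rfl, show nara 7 = 19 from rfl, show nara 8 = 28 from rfl, show nara 9 = 41 from rfl, show nara 10 = 60 from rfl, show nara 11 = 88 from rfl, show nara 12 = 129 from rfl, show nara 13 = 189 from rfl, show nara 14 = 277 from rfl, show nara 15 = 406 from rfl, show nara 16 = 595 from rfl, show nara 17 = 872 from rfl, show nara 18 = 1278 from rfl, show nara 19 = 1873 from rfl, show nara 20 = 2745 from rfl, show nara 21 = 4023 from rfl, show nara 22 = 5896 from rfl, show nara 23 = 8641 from rfl, show nara 24 = 12664 from rfl] <;>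
      push_cast <;> linarith [hL, hH]
  · obtain ⟨k, rfl⟩ := Nat.exists_eq_add_of_le' h
    have habs := err_abs α hα (k+24)
    have h1 : -(0.588 * 0.8262 ^ (k+24)) ≤ err α (k+24) := (abs_le.mp habs).1
    rw [show k + 24 + 3 = (k+3) + 24 from by omega]
    show -(1.3486 * 0.8262 ^ (k+24)) ≤ err α (k+24) + -(1.3486 * 0.8262 ^ ((k+3)+24))
    have hp : (0.8262:ℝ) ^ ((k+3)+24) = 0.8262^3 * 0.8262 ^ (k+24) := by
      rw [← pow_add]; ring_nf
    rw [hp]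
    have hrn : (0:ℝ) ≤ (0.8262:ℝ)^(k+24) := by positivity
    nlinarith [h1, hrn]

lemma sum_bounds (α : ℝ) (hα : α ^ 3 = α ^ 2 + 1) :
    ∀ k (F : Finset ℕ) (m : ℕ), F.card ≤ k →
      (∀ a ∈ F, ∀ b ∈ F, a < b → a + 3 ≤ b) → (∀ f ∈ F, m ≤ f) →
      Lt m ≤ (∑ f ∈ F, err α f) ∧ (∑ f ∈ F, err α f) ≤ Ut m := by
  intro k
  induction k with
  | zero =>
    intro F m hcard _ _
    have : F = ∅ := Finset.card_eq_zero.mp (Nat.le_zero.mp hcard)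
    subst this
    simp [Lt_nonpos m, Ut_nonneg m]
  | succ k ih =>
    intro F m hcard hgap hlow
    rcases Finset.eq_empty_or_nonempty F with rfl | hne
    · simp [Lt_nonpos m, Ut_nonneg m]
    · set f0 := F.min' hne with hf0
      have hf0mem : f0 ∈ F := F.min'_mem hne
      have hm : m ≤ f0 := hlow f0 hf0mem
      have hcard' : (F.erase f0).card ≤ k := by
        have := Finset.card_erase_of_mem hf0mem
        omega
      have hgap' : ∀ a ∈ F.erase f0, ∀ b ∈ F.erase f0, a < b → a + 3 ≤ b := by
        intro a ha b hb hab
        exact hgap a (Finset.mem_of_mem_erase ha) b (Finset.mem_of_mem_erase hb) hab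
      have hlow' : ∀ f ∈ F.erase f0, f0 + 3 ≤ f := by
        intro f hf
        have hfF := Finset.mem_of_mem_erase hf
        have hne' := Finset.ne_of_mem_erase hf
        have : f0 < f := lt_of_le_of_ne (F.min'_le f hfF) (Ne.symm hne')
        exact hgap f0 hf0mem f hfF this
      obtain ⟨ihL, ihU⟩ := ih (F.erase f0) (f0+3) hcard' hgap' hlow'
      have hsum : err α f0 + ∑ f ∈ F.erase f0, err α f = ∑ f ∈ F, err α f :=
        Finset.add_sum_erase F _ hf0mem
      constructor
      · calc Lt m ≤ Lt f0 := Lt_mono hm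
        _ ≤ err α f0 + Lt (f0+3) := Lt_step α hα f0
        _ ≤ err α f0 + ∑ f ∈ F.erase f0, err α f := by linarith
        _ = ∑ f ∈ F, err α f := hsum
      · calc (∑ f ∈ F, err α f) = err α f0 + ∑ f ∈ F.erase f0, err α f := hsum.symm
        _ ≤ err α f0 + Ut (f0+3) := by linarith
        _ ≤ Ut f0 := Ut_step α hα f0
        _ ≤ Ut m := Ut_anti hm

theorem shift_estimate (α : ℝ) (hα : α ^ 3 = α ^ 2 + 1)
    (i : ℕ) (F : Finset ℕ) (hF : NaraRep F i) :
    -0.8 < (∑ f ∈ F, (nara (f + 1) : ℝ)) - α * i ∧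
      (∑ f ∈ F, (nara (f + 1) : ℝ)) - α * i < 1.05 := by
  obtain ⟨hsum, hgap⟩ := hF
  have hi : (i : ℝ) = ∑ f ∈ F, (nara f : ℝ) := by
    rw [← hsum]; push_cast; ring
  have hrw : (∑ f ∈ F, (nara (f + 1) : ℝ)) - α * i = ∑ f ∈ F, err α f := by
    rw [hi, Finset.mul_sum, ← Finset.sum_sub_distrib]
    rfl
  rw [hrw]
  obtain ⟨hL, hU⟩ := sum_bounds α hα F.card F 0 le_rfl hgap (fun f _ => Nat.zero_le f)
  have hL0 : Lt 0 = -0.7907 := rfl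
  have hU0 : Ut 0 = 1.0407 := rfl
  rw [hL0] at hL
  rw [hU0] at hU
  constructor <;> [linarith ; linarith]
end

section
/- The subword complexity of the Narayana word n satisfies ρ_n(m) = 2m + 1 for all m ≥ 0, i.e., n has exactly 2m+1 distinct factors of each length m. -/
def IsFactor (x : List (Fin 3)) : Prop :=
  ∃ i, x = (List.range x.length).map (fun k => nword (i + k))

/-!
Let `x = nu x` be the Narayana word, cut into the blocks `nu (x j)`. The letters `1` and `2` are
always preceded by `0` and `1`, so a factor `u` occurring after two different letters begins
with `0`, and both occurrences start at block boundaries. A letter is recognised from the first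
two letters of its block, so `u` is, up to a truncated last block, the image of a shorter factor
occurring after two different letters (the last letter of `nu a` is `a + 1`). By induction that
factor is a prefix of `x`, hence so is `u`. Conversely, `nu` maps an occurrence of a prefix after
`c` to a longer one after `c + 1`, so each prefix occurs after all three letters. The prefix of
length `m` thus has three left extensions and every other factor of length `m` exactly one, whence
`ρ(m + 1) = ρ(m) + 2`.
-/

namespace Narayana

lemma one_le_length_nu (a : Fin 3) : 1 ≤ (nu a).length := by
  fin_cases a <;> simp [nu]

lemma length_nu_of_ne_zero {a : Fin 3} (h : a ≠ 0) : (nu a).length = 1 := by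
  fin_cases a <;> simp_all [nu]

lemma length_le_length_flatMap_nu (l : List (Fin 3)) : l.length ≤ (l.flatMap nu).length := by
  induction l with
  | nil => simp
  | cons a l ih =>
    simp only [List.flatMap_cons, List.length_append, List.length_cons]
    grind [one_le_length_nu a]

lemma length_lt_length_flatMap_nu {l : List (Fin 3)} (h : 0 ∈ l) :
    l.length < (l.flatMap nu).length := by
  induction l with
  | nil => simp at h
  | cons a l ih =>
    simp only [List.flatMap_cons, List.length_append, List.length_cons]
    rcases List.mem_cons.mp h with rfl | h
    · grind [nu, length_le_length_flatMap_nu l]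
    · grind [one_le_length_nu a]

lemma nuPow_succ (k : ℕ) : nuPow (k + 1) = (nuPow k).flatMap nu := by
  simp [nuPow, Function.iterate_succ_apply']

lemma nuPow_prefix_nuPow_succ (k : ℕ) : nuPow k <+: nuPow (k + 1) := by
  induction k with
  | zero => exact ⟨[1], rfl⟩
  | succ k ih => rw [nuPow_succ, nuPow_succ]; exact ih.flatMap nu

lemma nuPow_prefix_nuPow_of_le {k l : ℕ} (h : k ≤ l) : nuPow k <+: nuPow l := by
  induction h with
  | refl => exact List.prefix_rfl
  | step _ ih => exact ih.trans (nuPow_prefix_nuPow_succ _)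

lemma lt_length_nuPow (k : ℕ) : k < (nuPow k).length := by
  induction k with
  | zero => simp [nuPow]
  | succ k ih =>
    have hzero : 0 ∈ nuPow k := (nuPow_prefix_nuPow_of_le k.zero_le).subset (by simp [nuPow])
    rw [nuPow_succ]
    exact Nat.lt_of_le_of_lt ih (length_lt_length_flatMap_nu hzero)

lemma nword_eq_getElem_nuPow {k i : ℕ} (h : i < (nuPow k).length) : nword i = (nuPow k)[i] := by
  have hi : i < (nuPow (i + 2)).length := by have := lt_length_nuPow (i + 2); omega
  rw [nword, List.getD_eq_getElem _ _ hi]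
  rcases le_total k (i + 2) with hk | hk
  · exact ((nuPow_prefix_nuPow_of_le hk).getElem h).symm
  · exact (nuPow_prefix_nuPow_of_le hk).getElem hi

@[simp]
lemma nword_zero : nword 0 = 0 := rfl

def factorAt (i m : ℕ) : List (Fin 3) := (List.range m).map (fun k => nword (i + k))

@[simp]
lemma length_factorAt (i m : ℕ) : (factorAt i m).length = m := by simp [factorAt]

@[simp]
lemma getElem_factorAt (i m p : ℕ) (hp : p < (factorAt i m).length) :
    (factorAt i m)[p] = nword (i + p) := by simp [factorAt]

@[simp]
lemma factorAt_zero_right (i : ℕ) : factorAt i 0 = [] := rfl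

@[simp]
lemma factorAt_one (i : ℕ) : factorAt i 1 = [nword i] := by simp [factorAt]

lemma factorAt_add (i a b : ℕ) : factorAt i (a + b) = factorAt i a ++ factorAt (i + a) b := by
  simp only [factorAt, List.range_add, List.map_append, List.map_map]
  congr 1
  exact List.map_congr_left fun k _ => by simp [Nat.add_assoc]

lemma factorAt_succ (i m : ℕ) : factorAt i (m + 1) = nword i :: factorAt (i + 1) m := by
  rw [Nat.add_comm, factorAt_add]; rfl

lemma factorAt_succ' (i m : ℕ) : factorAt i (m + 1) = factorAt i m ++ [nword (i + m)] := by
  rw [factorAt_add]; rfl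

lemma factorAt_prefix_factorAt {i m n : ℕ} (h : m ≤ n) : factorAt i m <+: factorAt i n := by
  obtain ⟨k, rfl⟩ := Nat.exists_eq_add_of_le h
  rw [factorAt_add]
  exact List.prefix_append _ _

lemma eq_factorAt_of_prefix {l : List (Fin 3)} {i n : ℕ} (h : l <+: factorAt i n) :
    l = factorAt i l.length := by
  have hlen : l.length ≤ n := by simpa using h.length_le
  exact (List.prefix_of_prefix_length_le h (factorAt_prefix_factorAt hlen) (by simp)).eq_of_length
    (by simp)

lemma nuPow_eq_factorAt (k : ℕ) : nuPow k = factorAt 0 (nuPow k).length :=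
  List.ext_getElem (by simp) fun p h _ => by simp [nword_eq_getElem_nuPow h]

/-- The position where the image under `nu` of the `j`-th letter starts in `nword = nu nword`. -/
def blockStart (j : ℕ) : ℕ := ((factorAt 0 j).flatMap nu).length

@[simp]
lemma blockStart_zero : blockStart 0 = 0 := rfl

lemma blockStart_add (i s : ℕ) :
    blockStart (i + s) = blockStart i + ((factorAt i s).flatMap nu).length := by
  simp [blockStart, factorAt_add]

lemma blockStart_succ (j : ℕ) : blockStart (j + 1) = blockStart j + (nu (nword j)).length := by
  simp [blockStart_add, factorAt_succ]

lemma flatMap_factorAt_zero (s : ℕ) : (factorAt 0 s).flatMap nu = factorAt 0 (blockStart s) := by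
  apply eq_factorAt_of_prefix (n := (nuPow (s + 1)).length)
  rw [← nuPow_eq_factorAt, nuPow_succ]
  refine List.IsPrefix.flatMap ?_ nu
  rw [nuPow_eq_factorAt s]
  exact factorAt_prefix_factorAt (by simpa using (lt_length_nuPow s).le)

lemma factorAt_blockStart (i s : ℕ) :
    factorAt (blockStart i) ((factorAt i s).flatMap nu).length = (factorAt i s).flatMap nu := by
  have h := flatMap_factorAt_zero (i + s)
  rw [factorAt_add, List.flatMap_append, blockStart_add, factorAt_add, flatMap_factorAt_zero,
    zero_add] at h
  simpa using (List.append_cancel_left h).symm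

lemma factorAt_blockStart_length_nu (j : ℕ) :
    factorAt (blockStart j) (nu (nword j)).length = nu (nword j) := by
  simpa using factorAt_blockStart j 1

lemma nword_blockStart_add {j p : ℕ} (hp : p < (nu (nword j)).length) :
    nword (blockStart j + p) = (nu (nword j))[p] := by
  rw [← getElem_factorAt _ _ _ (by simpa using hp)]
  simp only [factorAt_blockStart_length_nu]

lemma nword_blockStart (j : ℕ) : nword (blockStart j) = if nword j = 1 then 2 else 0 := by
  rw [← add_zero (blockStart j), nword_blockStart_add (one_le_length_nu _)]
  generalize nword j = a
  fin_cases a <;> rfl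

lemma nword_blockStart_eq_two_iff (j : ℕ) : nword (blockStart j) = 2 ↔ nword j = 1 := by
  rw [nword_blockStart]; split_ifs <;> simp_all

lemma nword_blockStart_ne_one (j : ℕ) : nword (blockStart j) ≠ 1 := by
  rw [nword_blockStart]; split_ifs <;> simp

lemma nword_blockStart_add_one_eq_one_iff (j : ℕ) : nword (blockStart j + 1) = 1 ↔ nword j = 0 := by
  constructor
  · intro h
    by_contra hj
    rw [← length_nu_of_ne_zero hj, ← blockStart_succ] at h
    exact nword_blockStart_ne_one _ h
  · intro h
    have hlen : 1 < (nu (nword j)).length := by simp [h, nu]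
    rw [nword_blockStart_add hlen]
    simp [h, nu]

lemma nword_blockStart_succ_sub_one (j : ℕ) : nword (blockStart (j + 1) - 1) = nword j + 1 := by
  have hlen := one_le_length_nu (nword j)
  rw [blockStart_succ, Nat.add_sub_assoc hlen, nword_blockStart_add (by omega)]
  have hlast : ∀ a : Fin 3, ∀ h, (nu a)[(nu a).length - 1]'h = a + 1 := by decide
  exact hlast _ _

lemma eq_blockStart_or_eq_blockStart_add_one (n : ℕ) :
    (∃ j, n = blockStart j) ∨ ∃ j, nword j = 0 ∧ n = blockStart j + 1 := by
  induction n with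
  | zero => exact Or.inl ⟨0, rfl⟩
  | succ n ih =>
    rcases ih with ⟨j, rfl⟩ | ⟨j, hj, rfl⟩
    · by_cases hj : nword j = 0
      · exact Or.inr ⟨j, hj, rfl⟩
      · exact Or.inl ⟨j + 1, by rw [blockStart_succ, length_nu_of_ne_zero hj]⟩
    · exact Or.inl ⟨j + 1, by simp [blockStart_succ, hj, nu]⟩

lemma exists_eq_blockStart_of_ne_one {n : ℕ} (h : nword n ≠ 1) : ∃ j, n = blockStart j := by
  rcases eq_blockStart_or_eq_blockStart_add_one n with hj | ⟨j, hj, rfl⟩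
  · exact hj
  · exact absurd ((nword_blockStart_add_one_eq_one_iff j).mpr hj) h

lemma nword_eq_zero_of_succ_eq_one {i : ℕ} (h : nword (i + 1) = 1) : nword i = 0 := by
  rcases eq_blockStart_or_eq_blockStart_add_one (i + 1) with ⟨j, hj⟩ | ⟨j, hj, hij⟩
  · exact absurd (hj ▸ h) (nword_blockStart_ne_one j)
  · rw [Nat.add_right_cancel hij, nword_blockStart]
    simp [hj]

lemma nword_eq_one_of_succ_eq_two {i : ℕ} (h : nword (i + 1) = 2) : nword i = 1 := by
  obtain ⟨j, hj⟩ := exists_eq_blockStart_of_ne_one (h ▸ by decide : nword (i + 1) ≠ 1)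
  obtain ⟨j, rfl⟩ : ∃ j', j = j' + 1 := Nat.exists_eq_succ_of_ne_zero (by rintro rfl; simp at hj)
  have hj1 : nword (j + 1) = 1 := (nword_blockStart_eq_two_iff _).mp (hj ▸ h)
  rw [show i = blockStart (j + 1) - 1 by omega, nword_blockStart_succ_sub_one,
    nword_eq_zero_of_succ_eq_one hj1]
  rfl

lemma nword_eq_of_blockStart {a b : ℕ} (h₀ : nword (blockStart a) = nword (blockStart b))
    (h₁ : nword (blockStart a + 1) = nword (blockStart b + 1)) : nword a = nword b := by
  have hone : nword a = 1 ↔ nword b = 1 := by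
    rw [← nword_blockStart_eq_two_iff, ← nword_blockStart_eq_two_iff, h₀]
  have hzero : nword a = 0 ↔ nword b = 0 := by
    rw [← nword_blockStart_add_one_eq_one_iff, ← nword_blockStart_add_one_eq_one_iff, h₁]
  have hfin : ∀ p q : Fin 3, (p = 1 ↔ q = 1) → (p = 0 ↔ q = 0) → p = q := by decide
  exact hfin _ _ hone hzero

lemma nword_add_eq_of_factorAt_eq {i j m q : ℕ} (h : factorAt i m = factorAt j m) (hq : q < m) :
    nword (i + q) = nword (j + q) := by
  simpa [factorAt, hq] using congrArg (·[q]?) h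

lemma exists_lt_le_succ_of_strictMono {f : ℕ → ℕ} (hf : StrictMono f) (h₀ : f 0 = 0) {m : ℕ}
    (hm : 0 < m) : ∃ s, f s < m ∧ m ≤ f (s + 1) := by
  have hex : ∃ s, m ≤ f (s + 1) := ⟨m, (Nat.le_succ m).trans (hf.id_le _)⟩
  refine ⟨Nat.find hex, ?_, Nat.find_spec hex⟩
  rcases h : Nat.find hex with _ | s
  · omega
  · exact not_le.mp (Nat.find_min hex (h ▸ Nat.lt_succ_self s))

lemma strictMono_length_flatMap_factorAt (p : ℕ) :
    StrictMono fun s => ((factorAt p s).flatMap nu).length :=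
  strictMono_nat_of_lt_succ fun s => by
    have := one_le_length_nu (nword (p + s))
    simp only [factorAt_succ', List.flatMap_append, List.length_append, List.flatMap_cons,
      List.flatMap_nil, List.append_nil]
    omega

lemma factorAt_eq_of_factorAt_blockStart_eq {p r m s : ℕ}
    (h : factorAt (blockStart p) m = factorAt (blockStart r) m)
    (hs : ((factorAt p s).flatMap nu).length < m) : factorAt p s = factorAt r s := by
  induction s with
  | zero => rfl
  | succ s ih =>
    have hlt := (strictMono_length_flatMap_factorAt p) (Nat.lt_succ_self s)
    have hv := ih (hlt.trans hs)
    set L := ((factorAt p s).flatMap nu).length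
    have hL : L + 1 < m := lt_of_le_of_lt hlt hs
    have hp : blockStart (p + s) = blockStart p + L := blockStart_add p s
    have hr : blockStart (r + s) = blockStart r + L := by rw [blockStart_add, ← hv]
    have hletter : nword (p + s) = nword (r + s) := by
      apply nword_eq_of_blockStart
      · rw [hp, hr]; exact nword_add_eq_of_factorAt_eq h (by omega)
      · rw [hp, hr, add_assoc, add_assoc]; exact nword_add_eq_of_factorAt_eq h hL
    rw [factorAt_succ', factorAt_succ', hv, hletter]

/-- In the second alternative the factor ends with the first letter of a block whose letter is `0`
in one occurrence and `2` in the other; the letter before it is then `1`. -/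
lemma exists_desubst_of_factorAt_blockStart_eq {p r m : ℕ}
    (h : factorAt (blockStart p) m = factorAt (blockStart r) m) (hp : nword p = 0) (hm : 2 ≤ m) :
    (∃ s < m, factorAt p s = factorAt r s ∧
      factorAt (blockStart p) m <+: (factorAt p s).flatMap nu) ∨
    (∃ s, s + 1 < m ∧ factorAt p (s + 1) = factorAt r (s + 1) ∧ nword (p + s) = 1 ∧
      factorAt (blockStart p) m = (factorAt p (s + 1)).flatMap nu ++ [0]) := by
  obtain ⟨s, hsm, hms⟩ := exists_lt_le_succ_of_strictMono
    (strictMono_length_flatMap_factorAt p) rfl (by omega : 0 < m)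
  have hv := factorAt_eq_of_factorAt_blockStart_eq h hsm
  set L := ((factorAt p s).flatMap nu).length
  have hp' : blockStart (p + s) = blockStart p + L := blockStart_add p s
  have hr' : blockStart (r + s) = blockStart r + L := by rw [blockStart_add, ← hv]
  have hletter₀ : nword (blockStart (p + s)) = nword (blockStart (r + s)) := by
    rw [hp', hr']; exact nword_add_eq_of_factorAt_eq h hsm
  have hs : s + 1 < m := by
    rcases s with _ | s
    · omega
    · have hzero : 0 ∈ factorAt p (s + 1) := by simp [factorAt_succ, hp]
      have := length_lt_length_flatMap_nu hzero
      simp only [length_factorAt] at this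
      omega
  by_cases hsame : nword (p + s) = nword (r + s)
  · refine Or.inl ⟨s + 1, hs, by rw [factorAt_succ', factorAt_succ', hv, hsame], ?_⟩
    rw [← factorAt_blockStart]
    exact factorAt_prefix_factorAt hms
  · right
    have hmL : m = L + 1 := by
      by_contra hmL
      refine hsame (nword_eq_of_blockStart hletter₀ ?_)
      rw [hp', hr', add_assoc, add_assoc]
      exact nword_add_eq_of_factorAt_eq h (by omega)
    have hone : nword (p + s) = 1 ↔ nword (r + s) = 1 := by
      rw [← nword_blockStart_eq_two_iff, ← nword_blockStart_eq_two_iff, hletter₀]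
    have hfin : ∀ a b : Fin 3, a ≠ b → (a = 1 ↔ b = 1) → a ≠ 1 ∧ (a = 2 ∨ b = 2) := by decide
    obtain ⟨hne, htwo⟩ := hfin _ _ hsame hone
    obtain ⟨s, rfl⟩ : ∃ s', s = s' + 1 :=
      Nat.exists_eq_succ_of_ne_zero (by rintro rfl; simp [L] at hmL; omega)
    refine ⟨s, by omega, hv, ?_, ?_⟩
    · have hprev : nword (p + s) = nword (r + s) := nword_add_eq_of_factorAt_eq hv (by omega)
      rcases htwo with htwo | htwo
      · exact nword_eq_one_of_succ_eq_two htwo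
      · exact hprev ▸ nword_eq_one_of_succ_eq_two htwo
    · rw [hmL, factorAt_succ', factorAt_blockStart, ← hp', nword_blockStart, if_neg hne]

lemma nword_succ_eq_zero_of_ne {i j : ℕ} (hij : nword i ≠ nword j)
    (h : nword (i + 1) = nword (j + 1)) : nword (i + 1) = 0 := by
  by_contra hne
  have hfin : ∀ a : Fin 3, a ≠ 0 → a = 1 ∨ a = 2 := by decide
  rcases hfin _ hne with h1 | h2
  · exact hij ((nword_eq_zero_of_succ_eq_one h1).trans (nword_eq_zero_of_succ_eq_one (h ▸ h1)).symm)
  · exact hij ((nword_eq_one_of_succ_eq_two h2).trans (nword_eq_one_of_succ_eq_two (h ▸ h2)).symm)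

lemma exists_succ_eq_blockStart_succ {i : ℕ} (h : nword (i + 1) ≠ 1) :
    ∃ p, i + 1 = blockStart (p + 1) ∧ nword i = nword p + 1 := by
  obtain ⟨p, hp⟩ := exists_eq_blockStart_of_ne_one h
  obtain ⟨p, rfl⟩ := Nat.exists_eq_succ_of_ne_zero (by rintro rfl; simp at hp : p ≠ 0)
  exact ⟨p, hp, by rw [← nword_blockStart_succ_sub_one, ← hp, Nat.add_sub_cancel]⟩

lemma flatMap_factorAt_zero_append_zero {s : ℕ} (h : nword s = 1) :
    (factorAt 0 (s + 1)).flatMap nu ++ [0] = factorAt 0 (blockStart (s + 1) + 1) := by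
  have hne : nword (s + 1) ≠ 1 := fun h' => by simp [nword_eq_zero_of_succ_eq_one h'] at h
  rw [flatMap_factorAt_zero, factorAt_succ', zero_add, nword_blockStart, if_neg hne]

theorem factorAt_eq_factorAt_zero_of_left_special (m : ℕ) :
    ∀ {i j : ℕ}, nword i ≠ nword j → factorAt (i + 1) m = factorAt (j + 1) m →
      factorAt (i + 1) m = factorAt 0 m := by
  induction m using Nat.strong_induction_on with
  | _ m ih =>
  intro i j hij h
  rcases m with _ | _ | m
  · rfl
  · have := nword_succ_eq_zero_of_ne hij (by simpa using h)
    simp [this]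
  have hfirst := nword_add_eq_of_factorAt_eq h (q := 0) (by omega)
  simp only [add_zero] at hfirst
  have h₀ := nword_succ_eq_zero_of_ne hij hfirst
  obtain ⟨p, hip, hp⟩ := exists_succ_eq_blockStart_succ (i := i) (by simp [h₀])
  obtain ⟨r, hjr, hr⟩ := exists_succ_eq_blockStart_succ (i := j) (by simp [← hfirst, h₀])
  have hpr : nword p ≠ nword r := fun hpr => hij (by rw [hp, hr, hpr])
  rw [hip, hjr] at h
  rw [hip]
  have hp₀ : nword (p + 1) = 0 := by
    refine nword_succ_eq_zero_of_ne hpr (nword_eq_of_blockStart ?_ ?_)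
    · simpa using nword_add_eq_of_factorAt_eq h (q := 0) (by omega)
    · exact nword_add_eq_of_factorAt_eq h (q := 1) (by omega)
  obtain ⟨N, hpre⟩ : ∃ N, factorAt (blockStart (p + 1)) (m + 2) <+: factorAt 0 N := by
    rcases exists_desubst_of_factorAt_blockStart_eq h hp₀ (by omega) with
      ⟨s, hs, hv, hu⟩ | ⟨s, hs, hv, hs₁, hu⟩
    · rw [ih s hs hpr hv, flatMap_factorAt_zero] at hu
      exact ⟨_, hu⟩
    · have hv₀ := ih (s + 1) hs hpr hv
      have hx : nword s = 1 := by
        simpa [hs₁] using (nword_add_eq_of_factorAt_eq hv₀ (q := s) (by omega)).symm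
      exact ⟨_, by rw [hu, hv₀, flatMap_factorAt_zero_append_zero hx]⟩
  simpa using eq_factorAt_of_prefix hpre

lemma take_factorAt {i m n : ℕ} (h : m ≤ n) : (factorAt i n).take m = factorAt i m := by
  simpa using (List.prefix_iff_eq_take.mp (factorAt_prefix_factorAt (i := i) h)).symm

lemma lt_blockStart {n : ℕ} (hn : 0 < n) : n < blockStart n := by
  obtain ⟨n, rfl⟩ := Nat.exists_eq_succ_of_ne_zero hn.ne'
  have h := length_lt_length_flatMap_nu (l := factorAt 0 (n + 1)) (by simp [factorAt_succ])
  rwa [length_factorAt] at h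

lemma exists_nword_eq_factorAt_succ_eq_factorAt_zero (m : ℕ) (c : Fin 3) :
    ∃ i, nword i = c ∧ factorAt (i + 1) m = factorAt 0 m := by
  suffices ∀ m (c : Fin 3), ∃ i, nword i = c ∧ factorAt (i + 1) (m + 1) = factorAt 0 (m + 1) by
    obtain ⟨i, hi, h⟩ := this m c
    exact ⟨i, hi, by rw [← take_factorAt m.le_succ, h, take_factorAt m.le_succ]⟩
  intro m
  induction m with
  | zero =>
    intro c
    fin_cases c
    · exact ⟨3, by decide, by decide⟩
    · exact ⟨5, by decide, by decide⟩
    · exact ⟨2, by decide, by decide⟩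
  | succ m ih =>
    intro c
    obtain ⟨i, hi, h⟩ := ih (c - 1)
    have himage := factorAt_blockStart (i + 1) (m + 1)
    rw [h, flatMap_factorAt_zero, length_factorAt] at himage
    refine ⟨blockStart (i + 1) - 1, by rw [nword_blockStart_succ_sub_one, hi, sub_add_cancel], ?_⟩
    have hpos : 0 < blockStart (i + 1) := (Nat.succ_pos i).trans (lt_blockStart (Nat.succ_pos i))
    rw [Nat.sub_add_cancel hpos, ← take_factorAt (lt_blockStart (Nat.succ_pos m)), himage,
      take_factorAt (lt_blockStart (Nat.succ_pos m))]

lemma setOf_isFactor_eq_range (m : ℕ) :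
    {x : List (Fin 3) | x.length = m ∧ IsFactor x} = Set.range (factorAt · m) := by
  ext x
  constructor
  · rintro ⟨rfl, i, hx⟩
    exact ⟨i, hx.symm⟩
  · rintro ⟨i, rfl⟩
    exact ⟨length_factorAt i m, i, by rw [length_factorAt]; rfl⟩

lemma finite_range_factorAt (m : ℕ) : (Set.range (factorAt · m)).Finite :=
  (List.finite_length_eq (Fin 3) m).subset (by rintro _ ⟨i, rfl⟩; exact length_factorAt i m)

lemma factorAt_mem_range_cons_iff {i m : ℕ} :
    factorAt i (m + 1) ∈ Set.range (· :: factorAt 0 m) ↔ factorAt (i + 1) m = factorAt 0 m := by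
  simp [factorAt_succ, eq_comm]

lemma range_cons_subset_range_factorAt (m : ℕ) :
    Set.range (· :: factorAt 0 m) ⊆ Set.range (factorAt · (m + 1)) := by
  rintro _ ⟨c, rfl⟩
  obtain ⟨i, rfl, hi⟩ := exists_nword_eq_factorAt_succ_eq_factorAt_zero m c
  exact ⟨i, show factorAt i (m + 1) = _ by rw [factorAt_succ, hi]⟩

lemma injOn_tail_range_factorAt (m : ℕ) :
    Set.InjOn List.tail (Set.range (factorAt · (m + 1)) \ Set.range (· :: factorAt 0 m)) := by
  rintro _ ⟨⟨i, rfl⟩, hi⟩ _ ⟨⟨j, rfl⟩, -⟩ h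
  rw [factorAt_mem_range_cons_iff] at hi
  simp only [factorAt_succ, List.tail_cons] at h ⊢
  rw [h, not_not.mp fun hij => hi (factorAt_eq_factorAt_zero_of_left_special m hij h)]

lemma image_tail_range_factorAt (m : ℕ) :
    List.tail '' (Set.range (factorAt · (m + 1)) \ Set.range (· :: factorAt 0 m)) =
      Set.range (factorAt · m) \ {factorAt 0 m} := by
  ext u
  constructor
  · rintro ⟨_, ⟨⟨i, rfl⟩, hi⟩, rfl⟩
    rw [factorAt_mem_range_cons_iff] at hi
    exact ⟨⟨i + 1, by simp [factorAt_succ]⟩, by simpa [factorAt_succ] using hi⟩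
  · rintro ⟨⟨_ | i, rfl⟩, hne⟩
    · exact absurd rfl hne
    · refine ⟨factorAt i (m + 1), ⟨⟨i, rfl⟩, ?_⟩, by simp [factorAt_succ]⟩
      rwa [factorAt_mem_range_cons_iff]

lemma ncard_range_factorAt_succ (m : ℕ) :
    (Set.range (factorAt · (m + 1))).ncard = (Set.range (factorAt · m)).ncard + 2 := by
  have hsub := range_cons_subset_range_factorAt m
  calc (Set.range (factorAt · (m + 1))).ncard
      = (Set.range (factorAt · (m + 1)) \ Set.range (· :: factorAt 0 m)).ncard +
          (Set.range (· :: factorAt 0 m)).ncard :=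
        (Set.ncard_sdiff_add_ncard_of_subset hsub (finite_range_factorAt _)).symm
    _ = (Set.range (factorAt · m) \ {factorAt 0 m}).ncard + 3 := by
        rw [← (injOn_tail_range_factorAt m).ncard_image, image_tail_range_factorAt,
          Set.ncard_range_of_injective fun a b h => by simpa using h]
        simp
    _ = (Set.range (factorAt · m)).ncard + 2 := by
        rw [← Set.ncard_sdiff_singleton_add_one (Set.mem_range_self 0) (finite_range_factorAt m)]

lemma ncard_range_factorAt (m : ℕ) : (Set.range (factorAt · m)).ncard = 2 * m + 1 := by
  induction m with
  | zero => simp [Set.range_const]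
  | succ m ih => rw [ncard_range_factorAt_succ, ih]; ring

end Narayana

theorem narayana_subword_complexity (m : ℕ) :
    {x : List (Fin 3) | x.length = m ∧ IsFactor x}.ncard = 2 * m + 1 := by
  rw [Narayana.setOf_isFactor_eq_range, Narayana.ncard_range_factorAt]
end

section
/- Every natural number appears as a value of the Hofstadter H-sequence, and no natural number appears three or more times as a value; i.e., for all n there exists x with H(x) = n, and there do not exist x < y < z with H(x) = H(y) = H(z). -/
theorem hofstadter_values (H : ℕ → ℕ) (h0 : H 0 = 0)
    (hrec : ∀ i : ℕ, 1 ≤ i → H i + H (H (H (i - 1))) = i) :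
    (∀ n : ℕ, ∃ x : ℕ, H x = n) ∧
    ¬ ∃ x y z : ℕ, x < y ∧ y < z ∧ H x = H y ∧ H y = H z := by
  have h1 : H 1 = 1 := by
    have e := hrec 1 (by omega)
    simp only [Nat.sub_self, h0] at e
    omega
  -- key: H n ≤ n, and H (n+1) ∈ {H n, H n + 1}
  have key : ∀ n : ℕ, H n ≤ n ∧ H n ≤ H (n+1) ∧ H (n+1) ≤ H n + 1 := by
    intro n
    induction n using Nat.strong_induction_on with
    | _ n ih =>
      match n with
      | 0 =>
        refine ⟨by omega, ?_, ?_⟩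
        · show H 0 ≤ H 1; omega
        · show H 1 ≤ H 0 + 1; omega
      | (m+1) =>
        have ihm := ih m (by omega)
        have hHn : H (m+1) ≤ m+1 := by omega
        have e1 : H (m+1) + H (H (H m)) = m+1 := hrec (m+1) (by omega)
        have e2 : H (m+1+1) + H (H (H (m+1))) = m+1+1 := hrec (m+2) (by omega)
        have hcase : H (m+1) = H m ∨ H (m+1) = H m + 1 := by omega
        rcases hcase with hc | hc
        · rw [hc] at e2
          refine ⟨hHn, by omega, by omega⟩
        · have iha := ih (H m) (by omega)
          rw [hc] at e2
          have hcase2 : H (H m + 1) = H (H m) ∨ H (H m + 1) = H (H m) + 1 := by omega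
          rcases hcase2 with hd | hd
          · rw [hd] at e2
            refine ⟨hHn, by omega, by omega⟩
          · have ihb := ih (H (H m)) (by omega)
            rw [hd] at e2
            refine ⟨hHn, by omega, by omega⟩
  have twostep : ∀ n : ℕ, H (n+1) = H n → H (n+2) = H (n+1) + 1 := by
    intro n heq
    have e1 : H (n+1) + H (H (H n)) = n+1 := hrec (n+1) (by omega)
    have e2 : H (n+2) + H (H (H (n+1))) = n+2 := hrec (n+2) (by omega)
    rw [heq] at e2
    omega
  have mono : Monotone H := monotone_nat_of_le_succ (fun n => (key n).2.1)
  constructor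
  · intro n
    induction n with
    | zero => exact ⟨0, h0⟩
    | succ n ihn =>
      obtain ⟨x, hx⟩ := ihn
      have hk := (key x).2
      rcases (by omega : H (x+1) = n ∨ H (x+1) = n + 1) with hc | hc
      · exact ⟨x+2, by rw [twostep x (by omega)]; omega⟩
      · exact ⟨x+1, hc⟩
  · rintro ⟨x, y, z, hxy, hyz, e1, e2⟩
    have hx2z : x + 2 ≤ z := by omega
    have m1 : H x ≤ H (x+1) := mono (by omega)
    have m2 : H (x+1) ≤ H (x+2) := mono (by omega)
    have m3 : H (x+2) ≤ H z := mono hx2z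
    have heq : H (x+1) = H x := by omega
    have := twostep x heq
    omega
end
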